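/- Consider a birth–death Markov chain on the nonnegative integers such that from every state k \ge 1, the probability of moving to k-1 is at least k times the probability of moving to k+1 (and otherwise the chain stays put). Started from state 1, the probability that the chain reaches state m before reaching state 0 is at most 1/(m-1)!. -/

import Mathlib

/-! Write `d k = h (k + 1) - h k`. Harmonicity at `k` says `p k * d k = q k * d (k - 1)`, so
`q k ≥ k * p k` forces `d k ≥ k * d (k - 1)` as long as `d (k - 1) ≥ 0`; starting from
`d 0 = h 1 ≥ 0` this gives `d (m - 1) ≥ (m - 1)! * h 1`, while `d (m - 1) = 1 - h (m - 1) ≤ 1`. -/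

open Nat

theorem mul_sub_eq_mul_sub_of_harmonic {p q r a b c : ℝ} (hsum : p + q + r = 1)
    (hharm : b = q * a + p * c + r * b) : p * (c - b) = q * (b - a) := by
  linear_combination -hharm - b * hsum

theorem mul_le_of_mul_eq_mul {p q x y c : ℝ} (hp : 0 < p) (hcq : c * p ≤ q) (hx : 0 ≤ x)
    (hxy : p * y = q * x) : c * x ≤ y := by
  refine le_of_mul_le_mul_left ?_ hp
  calc p * (c * x) = (c * p) * x := by ring
    _ ≤ q * x := mul_le_mul_of_nonneg_right hcq hx
    _ = p * y := hxy.symm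

theorem factorial_mul_le_of_succ_mul_le {d : ℕ → ℝ} {n : ℕ} (hd0 : 0 ≤ d 0)
    (hstep : ∀ k, k < n → 0 ≤ d k → (k + 1 : ℝ) * d k ≤ d (k + 1)) :
    ∀ k, k ≤ n → (k ! : ℝ) * d 0 ≤ d k := by
  intro k
  induction k with
  | zero => simp
  | succ k ih =>
    intro hk
    have hdk : (k ! : ℝ) * d 0 ≤ d k := ih (by omega)
    calc ((k + 1)! : ℝ) * d 0 = (k + 1 : ℝ) * ((k ! : ℝ) * d 0) := by
          push_cast [factorial_succ]; ring
      _ ≤ (k + 1 : ℝ) * d k := by gcongr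
      _ ≤ d (k + 1) := hstep k (by omega) (le_trans (by positivity) hdk)

/-- For a birth–death chain on `{0,1,...}` in which from every state
`1 ≤ k < m` the probability `q k` of moving down satisfies `q k ≥ k * p k` where
`p k > 0` is the probability of moving up (and `r k ≥ 0` of staying put,
`p k + q k + r k = 1`), the probability `h 1` of hitting `m` before `0` starting
from `1` is at most `1/(m-1)!`. Here `h` is the hitting-probability function,
characterized by its boundary values and harmonicity. -/
theorem stmt3 (m : ℕ) (hm : 2 ≤ m) (p q r h : ℕ → ℝ)
    (hprob : ∀ k, 1 ≤ k → k < m → p k + q k + r k = 1 ∧ 0 < p k ∧ (k : ℝ) * p k ≤ q k ∧ 0 ≤ r k)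
    (h0 : h 0 = 0) (hm1 : h m = 1)
    (hrange : ∀ k, 0 ≤ h k ∧ h k ≤ 1)
    (hrec : ∀ k, 1 ≤ k → k < m → h k = q k * h (k - 1) + p k * h (k + 1) + r k * h k) :
    h 1 ≤ 1 / (Nat.factorial (m - 1)) := by
  set d : ℕ → ℝ := fun k => h (k + 1) - h k with hd
  have hd0 : d 0 = h 1 := by simp [hd, h0]
  have hstep : ∀ k, k < m - 1 → 0 ≤ d k → (k + 1 : ℝ) * d k ≤ d (k + 1) := by
    intro k hk hdk
    obtain ⟨hsum, hp, hqp, -⟩ := hprob (k + 1) (by omega) (by omega)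
    have hharm := hrec (k + 1) (by omega) (by omega)
    rw [Nat.add_sub_cancel] at hharm
    exact mul_le_of_mul_eq_mul hp (by exact_mod_cast hqp) hdk
      (mul_sub_eq_mul_sub_of_harmonic hsum hharm)
  have hgrowth := factorial_mul_le_of_succ_mul_le (hd0 ▸ (hrange 1).1) hstep (m - 1) le_rfl
  have hlast : d (m - 1) ≤ 1 := by
    simp only [hd, Nat.sub_add_cancel (by omega : 1 ≤ m), hm1]
    linarith [(hrange (m - 1)).1]
  rw [le_div_iff₀ (by positivity), mul_comm, ← hd0]
  linarith
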